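/- (Failure of alternating projections between cylinder and spiral.) In ℝ³, let B = {x : x₁² + x₂² = 1, 0 ≤ x₃ ≤ 1} (the cylinder mantle), F = {(cos t, sin t, 0) : t ≥ 0} (the base circle), and A = {((1 + e^{−t})·cos t, (1 + e^{−t})·sin t, e^{−t/2}) : t ≥ 0} ∪ F (a logarithmic spiral winding onto F). Then every alternating sequence (a_k, b_k) between A and B, i.e. b_k ∈ P_B(a_k) and a_{k+1} ∈ P_A(b_k), started at a₁ ∈ A \ F, satisfies a_k − a_{k+1} → 0, b_k − b_{k+1} → 0, a_k − b_k → 0, yet neither (a_k) nor (b_k) converges, and the set of accumulation points of each sequence equals F. -/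

import Mathlib

/-!
The cylinder projection of the spiral point `spiralPt t` is the point `cylPt t (exp (-t/2))`
straight towards the axis, at distance `exp (-t)`. The squared distance from that point to
`spiralPt s` has derivative `-2 exp (-2t)` at `s = t`, while every base-circle point is at
least `exp (-t)` away, so its spiral projection is some `spiralPt s` with `s > t`, strictly
closer. The alternating sequence is therefore driven by increasing parameters `t k`, with
`‖a k - b k‖ = exp (-t k)` and `‖b k - a (k+1)‖ < exp (-t k)`. The parameters diverge, since a
finite limit would be a fixed point of this strict descent; comparing heights then forces
`t (k+1) - t k → 0`. So the angles `t k` wind around the circle infinitely often with vanishing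
steps while the heights `exp (-t k / 2)` tend to `0`: the accumulation points are exactly the
base circle.
-/

open Set Metric Filter Topology Real

noncomputable section

/-- The (possibly multivalued) metric projection onto a set `S`. -/
def projSet {E : Type*} [NormedAddCommGroup E] (S : Set E) (x : E) : Set E :=
  {s | s ∈ S ∧ ‖x - s‖ = Metric.infDist x S}

/-- A point of ℝ³. -/
def pt3 (a b c : ℝ) : EuclideanSpace ℝ (Fin 3) :=
  (WithLp.equiv 2 (Fin 3 → ℝ)).symm ![a, b, c]

/-- The cylinder mantle `B = {x : x₁² + x₂² = 1, 0 ≤ x₃ ≤ 1}`. -/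
def cylinder : Set (EuclideanSpace ℝ (Fin 3)) :=
  {x | (x 0)^2 + (x 1)^2 = 1 ∧ 0 ≤ x 2 ∧ x 2 ≤ 1}

/-- The base circle `F = {(cos t, sin t, 0) : t ≥ 0}`. -/
def baseCircle : Set (EuclideanSpace ℝ (Fin 3)) :=
  {x | ∃ t : ℝ, 0 ≤ t ∧ x = pt3 (cos t) (sin t) 0}

/-- The logarithmic spiral winding onto the base circle. -/
def spiral : Set (EuclideanSpace ℝ (Fin 3)) :=
  {x | ∃ t : ℝ, 0 ≤ t ∧
    x = pt3 ((1 + exp (-t)) * cos t) ((1 + exp (-t)) * sin t) (exp (-t/2))} ∪ baseCircle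

/-- The set of accumulation points of a sequence. -/
def accPts (u : ℕ → EuclideanSpace ℝ (Fin 3)) : Set (EuclideanSpace ℝ (Fin 3)) :=
  {x | ∃ φ : ℕ → ℕ, StrictMono φ ∧ Tendsto (u ∘ φ) atTop (𝓝 x)}

@[simp] lemma pt3_apply_zero (a b c : ℝ) : pt3 a b c 0 = a := rfl
@[simp] lemma pt3_apply_one (a b c : ℝ) : pt3 a b c 1 = b := rfl
@[simp] lemma pt3_apply_two (a b c : ℝ) : pt3 a b c 2 = c := rfl

lemma eq_pt3 {x : EuclideanSpace ℝ (Fin 3)} : x = pt3 (x 0) (x 1) (x 2) := by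
  ext i; fin_cases i <;> rfl

lemma dist_sq_eq_fin_three (x y : EuclideanSpace ℝ (Fin 3)) :
    dist x y ^ 2 = (x 0 - y 0) ^ 2 + (x 1 - y 1) ^ 2 + (x 2 - y 2) ^ 2 := by
  rw [EuclideanSpace.dist_eq, sq_sqrt (by positivity)]
  simp [Fin.sum_univ_three, Real.dist_eq, sq_abs]

lemma Continuous.pt3 {f g h : ℝ → ℝ} (hf : Continuous f) (hg : Continuous g) (hh : Continuous h) :
    Continuous fun x => pt3 (f x) (g x) (h x) :=
  (PiLp.continuous_toLp 2 _).comp <| continuous_pi fun i => by fin_cases i <;> simpa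

def spiralPt (s : ℝ) : EuclideanSpace ℝ (Fin 3) :=
  pt3 ((1 + exp (-s)) * cos s) ((1 + exp (-s)) * sin s) (exp (-s/2))

def cylPt (θ h : ℝ) : EuclideanSpace ℝ (Fin 3) := pt3 (cos θ) (sin θ) h

lemma spiralPt_mem_spiral {s : ℝ} (hs : 0 ≤ s) : spiralPt s ∈ spiral := Or.inl ⟨s, hs, rfl⟩

lemma cylPt_mem_cylinder (θ : ℝ) {h : ℝ} (h0 : 0 ≤ h) (h1 : h ≤ 1) : cylPt θ h ∈ cylinder :=
  ⟨by simp [cylPt, cos_sq_add_sin_sq], h0, h1⟩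

lemma cylPt_zero_mem_baseCircle {θ : ℝ} (hθ : 0 ≤ θ) : cylPt θ 0 ∈ baseCircle := ⟨θ, hθ, rfl⟩

lemma spiralPt_injective : Function.Injective spiralPt := fun s s' h => by
  have : exp (-s/2) = exp (-s'/2) := congrArg (· 2) h
  linarith [exp_injective this]

lemma continuous_spiralPt : Continuous spiralPt :=
  Continuous.pt3 (by fun_prop) (by fun_prop) (by fun_prop)

lemma cylPt_add_int_mul_two_pi (θ h : ℝ) (n : ℤ) : cylPt (θ + n * (2 * π)) h = cylPt θ h := by
  simp [cylPt, cos_add_int_mul_two_pi, sin_add_int_mul_two_pi]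

lemma dist_cylPt_spiralPt_sq (θ h s : ℝ) :
    dist (cylPt θ h) (spiralPt s) ^ 2
      = (1 + exp (-s)) ^ 2 - 2 * (1 + exp (-s)) * cos (s - θ) + 1 + (exp (-s/2) - h) ^ 2 := by
  simp only [dist_sq_eq_fin_three, cylPt, spiralPt, pt3_apply_zero, pt3_apply_one, pt3_apply_two,
    cos_sub]
  linear_combination sin_sq_add_cos_sq θ + (1 + exp (-s)) ^ 2 * sin_sq_add_cos_sq s

lemma dist_cylPt_cylPt_sq (θ h θ' h' : ℝ) :
    dist (cylPt θ h) (cylPt θ' h') ^ 2 = 2 - 2 * cos (θ - θ') + (h - h') ^ 2 := by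
  simp only [dist_sq_eq_fin_three, cylPt, pt3_apply_zero, pt3_apply_one, pt3_apply_two, cos_sub]
  linear_combination sin_sq_add_cos_sq θ + sin_sq_add_cos_sq θ'

lemma dist_cylPt_cylPt_le (θ θ' h : ℝ) : dist (cylPt θ h) (cylPt θ' h) ≤ |θ - θ'| := by
  refine (pow_le_pow_iff_left₀ dist_nonneg (abs_nonneg _) two_ne_zero).1 ?_
  rw [dist_cylPt_cylPt_sq, sq_abs]
  linarith [one_sub_sq_div_two_le_cos (x := θ - θ')]

lemma dist_cylPt_spiralPt_self (s : ℝ) : dist (cylPt s (exp (-s/2))) (spiralPt s) = exp (-s) := by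
  refine (pow_left_inj₀ dist_nonneg (exp_pos _).le two_ne_zero).1 ?_
  rw [dist_cylPt_spiralPt_sq]
  simp only [sub_self, cos_zero]
  ring

lemma dist_spiralPt_sq_of_mem_cylinder (s : ℝ) {y : EuclideanSpace ℝ (Fin 3)} (hy : y ∈ cylinder) :
    dist (spiralPt s) y ^ 2 = exp (-s) ^ 2
      + (1 + exp (-s)) * ((cos s - y 0) ^ 2 + (sin s - y 1) ^ 2) + (exp (-s/2) - y 2) ^ 2 := by
  simp only [dist_sq_eq_fin_three, spiralPt, pt3_apply_zero, pt3_apply_one, pt3_apply_two]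
  linear_combination (-exp (-s)) * hy.1 + exp (-s) * (1 + exp (-s)) * sin_sq_add_cos_sq s

lemma exp_neg_le_dist_spiralPt (s : ℝ) {y : EuclideanSpace ℝ (Fin 3)} (hy : y ∈ cylinder) :
    exp (-s) ≤ dist (spiralPt s) y := by
  refine (pow_le_pow_iff_left₀ (exp_pos _).le dist_nonneg two_ne_zero).1 ?_
  rw [dist_spiralPt_sq_of_mem_cylinder s hy]
  have := exp_pos (-s)
  nlinarith [sq_nonneg (cos s - y 0), sq_nonneg (sin s - y 1), sq_nonneg (exp (-s/2) - y 2)]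

lemma infDist_spiralPt_cylinder {s : ℝ} (hs : 0 ≤ s) : infDist (spiralPt s) cylinder = exp (-s) := by
  have hfoot : cylPt s (exp (-s/2)) ∈ cylinder :=
    cylPt_mem_cylinder s (exp_pos _).le (exp_le_one_iff.2 (by linarith))
  refine le_antisymm ?_ ((le_infDist ⟨_, hfoot⟩).2 fun y hy => exp_neg_le_dist_spiralPt s hy)
  calc infDist (spiralPt s) cylinder ≤ dist (spiralPt s) (cylPt s (exp (-s/2))) :=
        infDist_le_dist_of_mem hfoot
    _ = exp (-s) := by rw [dist_comm, dist_cylPt_spiralPt_self]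

lemma eq_cylPt_of_mem_projSet_cylinder {s : ℝ} (hs : 0 ≤ s) {y : EuclideanSpace ℝ (Fin 3)}
    (hy : y ∈ projSet cylinder (spiralPt s)) : y = cylPt s (exp (-s/2)) := by
  obtain ⟨hyc, hdist⟩ := hy
  rw [← dist_eq_norm, infDist_spiralPt_cylinder hs] at hdist
  have hsq := dist_spiralPt_sq_of_mem_cylinder s hyc
  rw [hdist] at hsq
  have hu := exp_pos (-s)
  have h0 : cos s - y 0 = 0 := by
    nlinarith [sq_nonneg (cos s - y 0), sq_nonneg (sin s - y 1), sq_nonneg (exp (-s/2) - y 2)]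
  have h1 : sin s - y 1 = 0 := by
    nlinarith [sq_nonneg (cos s - y 0), sq_nonneg (sin s - y 1), sq_nonneg (exp (-s/2) - y 2)]
  have h2 : exp (-s/2) - y 2 = 0 := by
    nlinarith [sq_nonneg (cos s - y 0), sq_nonneg (sin s - y 1), sq_nonneg (exp (-s/2) - y 2)]
  rw [eq_pt3 (x := y), cylPt, ← sub_eq_zero.1 h0, ← sub_eq_zero.1 h1, ← sub_eq_zero.1 h2]

lemma exists_gt_lt_of_hasDerivAt_neg {f : ℝ → ℝ} {f' x : ℝ} (hf : HasDerivAt f f' x)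
    (hf' : f' < 0) : ∃ y, x < y ∧ f y < f x := by
  have hslope : ∀ᶠ y in 𝓝[>] x, slope f x y < 0 :=
    (hf.tendsto_slope.mono_left (nhdsGT_le_nhdsNE x)).eventually (gt_mem_nhds hf')
  obtain ⟨y, hy, hxy⟩ := (hslope.and self_mem_nhdsWithin).exists
  refine ⟨y, hxy, ?_⟩
  rw [slope_def_field, div_neg_iff] at hy
  rcases hy with ⟨-, hneg⟩ | ⟨hlt, -⟩ <;> linarith [show x < y from hxy]

lemma hasDerivAt_dist_cylPt_spiralPt_sq (t : ℝ) :
    HasDerivAt (fun s => dist (cylPt t (exp (-t/2))) (spiralPt s) ^ 2) (-2 * exp (-t) ^ 2) t := by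
  simp only [dist_cylPt_spiralPt_sq]
  have hexp : HasDerivAt (fun s => exp (-s)) (-exp (-t)) t := by
    simpa using (hasDerivAt_neg t).exp
  have hexp2 : HasDerivAt (fun s => exp (-s/2)) (-exp (-t/2) / 2) t := by
    convert ((hasDerivAt_neg t).div_const 2).exp using 1
    ring
  have hcos : HasDerivAt (fun s => cos (s - t)) (-sin (t - t)) t := by
    simpa using ((hasDerivAt_id t).sub_const t).cos
  have hsum := ((((hexp.const_add 1).pow 2).sub (((hexp.const_add 1).const_mul 2).mul hcos)).add_const
    1).add ((hexp2.sub_const (exp (-t/2))).pow 2)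
  refine hsum.congr_deriv ?_
  simp only [sub_self, sin_zero, cos_zero]
  ring

lemma infDist_cylPt_spiral_lt {t : ℝ} (ht : 0 ≤ t) :
    infDist (cylPt t (exp (-t/2))) spiral < exp (-t) := by
  obtain ⟨s, hts, hs⟩ := exists_gt_lt_of_hasDerivAt_neg (hasDerivAt_dist_cylPt_spiralPt_sq t)
    (by have := exp_pos (-t); nlinarith)
  rw [dist_cylPt_spiralPt_self] at hs
  calc infDist (cylPt t (exp (-t/2))) spiral ≤ dist (cylPt t (exp (-t/2))) (spiralPt s) :=
        infDist_le_dist_of_mem (spiralPt_mem_spiral (by linarith))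
    _ < exp (-t) := (pow_lt_pow_iff_left₀ dist_nonneg (exp_pos _).le two_ne_zero).1 hs

lemma exp_neg_le_dist_cylPt_of_mem_baseCircle {t : ℝ} (ht : 0 ≤ t) {y : EuclideanSpace ℝ (Fin 3)}
    (hy : y ∈ baseCircle) : exp (-t) ≤ dist (cylPt t (exp (-t/2))) y := by
  obtain ⟨θ, -, rfl⟩ := hy
  change exp (-t) ≤ dist (cylPt t (exp (-t/2))) (cylPt θ 0)
  refine (pow_le_pow_iff_left₀ (exp_pos _).le dist_nonneg two_ne_zero).1 ?_
  rw [dist_cylPt_cylPt_sq, sub_zero, ← exp_nat_mul, ← exp_nat_mul]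
  have : exp (2 * -t) ≤ exp (2 * (-t/2)) := exp_le_exp.2 (by linarith)
  push_cast
  linarith [cos_le_one (t - θ)]

lemma exists_eq_spiralPt_of_mem_projSet_spiral {t : ℝ} (ht : 0 ≤ t) {y : EuclideanSpace ℝ (Fin 3)}
    (hy : y ∈ projSet spiral (cylPt t (exp (-t/2)))) : ∃ s, t < s ∧ y = spiralPt s := by
  obtain ⟨hys, hdist⟩ := hy
  rw [← dist_eq_norm] at hdist
  have hlt : dist (cylPt t (exp (-t/2))) y < exp (-t) := hdist ▸ infDist_cylPt_spiral_lt ht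
  rcases hys with ⟨s, -, rfl⟩ | hbase
  · refine ⟨s, ?_, rfl⟩
    have hfoot : cylPt t (exp (-t/2)) ∈ cylinder :=
      cylPt_mem_cylinder t (exp_pos _).le (exp_le_one_iff.2 (by linarith))
    rw [dist_comm] at hlt
    linarith [exp_lt_exp.1 ((exp_neg_le_dist_spiralPt s hfoot).trans_lt hlt)]
  · exact absurd hlt (not_lt.2 (exp_neg_le_dist_cylPt_of_mem_baseCircle ht hbase))

lemma exists_params_of_alternating {a b : ℕ → EuclideanSpace ℝ (Fin 3)}
    (hstart : a 0 ∈ spiral \ baseCircle) (hb : ∀ k, b k ∈ projSet cylinder (a k))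
    (ha : ∀ k, a (k+1) ∈ projSet spiral (b k)) :
    ∃ t : ℕ → ℝ, (∀ k, 0 ≤ t k) ∧ (∀ k, a k = spiralPt (t k)) ∧
      (∀ k, b k = cylPt (t k) (exp (-t k / 2))) ∧ ∀ k, t k < t (k+1) := by
  have hstep : ∀ {k τ}, 0 ≤ τ → a k = spiralPt τ →
      b k = cylPt τ (exp (-τ / 2)) ∧ ∃ s, τ < s ∧ a (k+1) = spiralPt s := by
    intro k τ hτ hak
    have hbk := hb k
    rw [hak] at hbk
    have hbk' := eq_cylPt_of_mem_projSet_cylinder hτ hbk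
    have hak' := ha k
    rw [hbk'] at hak'
    exact ⟨hbk', exists_eq_spiralPt_of_mem_projSet_spiral hτ hak'⟩
  have hparam : ∀ k, ∃ τ, 0 ≤ τ ∧ a k = spiralPt τ := by
    intro k
    induction k with
    | zero =>
      obtain ⟨⟨τ, hτ, ha0⟩ | hbase, hnot⟩ := hstart
      · exact ⟨τ, hτ, ha0⟩
      · exact absurd hbase hnot
    | succ k ih =>
      obtain ⟨τ, hτ, hak⟩ := ih
      obtain ⟨s, hτs, hs⟩ := (hstep hτ hak).2
      exact ⟨s, by linarith, hs⟩
  choose t ht0 hat using hparam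
  refine ⟨t, ht0, hat, fun k => (hstep (ht0 k) (hat k)).1, fun k => ?_⟩
  obtain ⟨s, hts, hs⟩ := (hstep (ht0 k) (hat k)).2
  rwa [spiralPt_injective ((hat (k+1)).symm.trans hs)]

lemma continuous_cylPt_exp : Continuous fun τ => cylPt τ (exp (-τ / 2)) :=
  Continuous.pt3 continuous_cos continuous_sin (by fun_prop)

/-- The parameters escape to infinity: a finite limit `T` would make `cylPt T (exp (-T/2))` have
its nearest spiral point at `spiralPt T`, which `infDist_cylPt_spiral_lt` rules out. -/
lemma tendsto_atTop_of_infDist_eq {t : ℕ → ℝ} (hmono : Monotone t) (h0 : ∀ k, 0 ≤ t k)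
    (h : ∀ k, infDist (cylPt (t k) (exp (-t k / 2))) spiral
      = dist (cylPt (t k) (exp (-t k / 2))) (spiralPt (t (k+1)))) :
    Tendsto t atTop atTop := by
  refine (tendsto_atTop_of_monotone hmono).resolve_right ?_
  rintro ⟨T, hT⟩
  have hinf : Tendsto (fun k => infDist (cylPt (t k) (exp (-t k / 2))) spiral) atTop
      (𝓝 (infDist (cylPt T (exp (-T / 2))) spiral)) :=
    (((continuous_infDist_pt spiral).comp continuous_cylPt_exp).tendsto T).comp hT
  have hdist : Tendsto (fun k => dist (cylPt (t k) (exp (-t k / 2))) (spiralPt (t (k+1)))) atTop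
      (𝓝 (dist (cylPt T (exp (-T / 2))) (spiralPt T))) :=
    ((continuous_cylPt_exp.tendsto T).comp hT).dist
      ((continuous_spiralPt.tendsto T).comp (hT.comp (tendsto_add_atTop_nat 1)))
  have hfix := tendsto_nhds_unique hinf (hdist.congr fun k => (h k).symm)
  rw [dist_cylPt_spiralPt_self] at hfix
  exact (infDist_cylPt_spiral_lt (ge_of_tendsto' hT h0)).ne hfix

lemma one_sub_exp_neg_half_lt {t s : ℝ} (hd : dist (cylPt t (exp (-t/2))) (spiralPt s) < exp (-t)) :
    1 - exp (-(s - t) / 2) < exp (-t / 2) := by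
  have hsq : (exp (-t/2) - exp (-s/2)) ^ 2 < exp (-t) ^ 2 := by
    have := dist_cylPt_spiralPt_sq t (exp (-t/2)) s
    have := pow_lt_pow_left₀ hd dist_nonneg two_ne_zero
    nlinarith [cos_le_one (s - t), exp_pos (-s)]
  have hlt := lt_of_pow_lt_pow_left₀ 2 (exp_pos _).le hsq
  have e1 : exp (-s/2) = exp (-t/2) * exp (-(s - t) / 2) := by rw [← exp_add]; ring_nf
  have e2 : exp (-t) = exp (-t/2) * exp (-t/2) := by rw [← exp_add]; ring_nf
  rw [e1, e2, ← mul_one_sub] at hlt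
  exact lt_of_mul_lt_mul_left hlt (exp_pos _).le

lemma tendsto_succ_sub_zero {t : ℕ → ℝ} (hlt : ∀ k, t k < t (k+1)) (htop : Tendsto t atTop atTop)
    (hd : ∀ k, dist (cylPt (t k) (exp (-t k / 2))) (spiralPt (t (k+1))) < exp (-t k)) :
    Tendsto (fun k => t (k+1) - t k) atTop (𝓝 0) := by
  have hexp : Tendsto (fun k => exp (-(t (k+1) - t k) / 2)) atTop (𝓝 1) := by
    have hlow : Tendsto (fun k => 1 - exp (-t k / 2)) atTop (𝓝 1) := by
      simpa using tendsto_const_nhds.sub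
        (tendsto_exp_atBot.comp ((tendsto_neg_atTop_atBot.comp htop).atBot_div_const two_pos))
    refine tendsto_of_tendsto_of_tendsto_of_le_of_le hlow tendsto_const_nhds (fun k => ?_) fun k => ?_
    · linarith [one_sub_exp_neg_half_lt (hd k)]
    · exact exp_le_one_iff.2 (by linarith [hlt k])
  have hlog := ((continuousAt_log one_ne_zero).tendsto.comp hexp).const_mul (-2)
  simp only [log_one, mul_zero, Function.comp_def, log_exp] at hlog
  convert hlog using 2
  ring

lemma exists_cos_sin_eq {x y : ℝ} (h : x ^ 2 + y ^ 2 = 1) : ∃ θ, 0 ≤ θ ∧ cos θ = x ∧ sin θ = y := by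
  have hx : -1 ≤ x ∧ x ≤ 1 := ⟨by nlinarith [sq_nonneg y], by nlinarith [sq_nonneg y]⟩
  have hsin : sqrt (1 - x ^ 2) = |y| := by rw [← h, add_sub_cancel_left, sqrt_sq_eq_abs]
  rcases le_or_gt 0 y with hy | hy
  · exact ⟨arccos x, arccos_nonneg x, cos_arccos hx.1 hx.2, by rw [sin_arccos, hsin, abs_of_nonneg hy]⟩
  · refine ⟨2 * π - arccos x, by linarith [arccos_le_pi x, pi_pos], ?_, ?_⟩
    · rw [cos_two_pi_sub, cos_arccos hx.1 hx.2]
    · rw [sin_two_pi_sub, sin_arccos, hsin, abs_of_neg hy, neg_neg]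

lemma baseCircle_eq : baseCircle = {x | x 0 ^ 2 + x 1 ^ 2 = 1 ∧ x 2 = 0} := by
  ext x
  constructor
  · rintro ⟨θ, -, rfl⟩
    exact ⟨by simp [cos_sq_add_sin_sq], rfl⟩
  · rintro ⟨hcirc, hx2⟩
    obtain ⟨θ, hθ, hcos, hsin⟩ := exists_cos_sin_eq hcirc
    exact ⟨θ, hθ, by rw [eq_pt3 (x := x), hcos, hsin, hx2]⟩

lemma isClosed_baseCircle : IsClosed baseCircle := by
  rw [baseCircle_eq]
  exact (isClosed_eq (by fun_prop) continuous_const).inter (isClosed_eq (by fun_prop) continuous_const)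

lemma accPts_subset_of_tendsto_sub {u v : ℕ → EuclideanSpace ℝ (Fin 3)}
    (h : Tendsto (fun k => u k - v k) atTop (𝓝 0)) : accPts u ⊆ accPts v := by
  rintro x ⟨φ, hφ, hx⟩
  refine ⟨φ, hφ, ?_⟩
  simpa [Function.comp_def] using hx.sub (h.comp hφ.tendsto_atTop)

lemma accPts_eq_of_tendsto_sub {u v : ℕ → EuclideanSpace ℝ (Fin 3)}
    (h : Tendsto (fun k => u k - v k) atTop (𝓝 0)) : accPts u = accPts v :=
  (accPts_subset_of_tendsto_sub h).antisymm
    (accPts_subset_of_tendsto_sub (by simpa using h.neg))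

lemma accPts_subset_of_eventually_mem {u : ℕ → EuclideanSpace ℝ (Fin 3)}
    {s : Set (EuclideanSpace ℝ (Fin 3))} (hs : IsClosed s) (h : ∀ᶠ k in atTop, u k ∈ s) :
    accPts u ⊆ s := by
  rintro x ⟨φ, hφ, hx⟩
  exact hs.mem_of_tendsto hx (hφ.tendsto_atTop.eventually h)

lemma mem_accPts_of_frequently_dist_lt {u : ℕ → EuclideanSpace ℝ (Fin 3)}
    {x : EuclideanSpace ℝ (Fin 3)} (h : ∀ ε > 0, ∃ᶠ k in atTop, dist (u k) x < ε) :
    x ∈ accPts u :=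
  (nhds_basis_ball.mapClusterPt_iff_frequently.2 h).tendsto_subseq

lemma not_tendsto_of_accPts_eq_baseCircle {u : ℕ → EuclideanSpace ℝ (Fin 3)}
    (h : accPts u = baseCircle) : ¬ ∃ l, Tendsto u atTop (𝓝 l) := by
  rintro ⟨l, hl⟩
  have hlim : ∀ x ∈ baseCircle, x = l := by
    rintro x hx
    obtain ⟨φ, hφ, hx⟩ := h ▸ hx
    exact tendsto_nhds_unique hx (hl.comp hφ.tendsto_atTop)
  have hne : cylPt 0 0 ≠ cylPt π 0 := fun heq => by
    have := congrArg (· 0) heq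
    norm_num [cylPt] at this
  exact hne ((hlim _ (cylPt_zero_mem_baseCircle le_rfl)).trans
    (hlim _ (cylPt_zero_mem_baseCircle pi_pos.le)).symm)

lemma exists_ge_mem_Ico_of_sub_lt {t : ℕ → ℝ} {M : ℕ} {L ε : ℝ}
    (hstep : ∀ k ≥ M, t (k+1) - t k < ε) (hM : t M < L) (hL : ∀ᶠ k in atTop, L ≤ t k) :
    ∃ k ≥ M, L ≤ t k ∧ t k < L + ε := by
  by_contra! hjump
  have hbelow : ∀ j, t (M + j) < L := by
    intro j
    induction j with
    | zero => exact hM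
    | succ j ih =>
      show t (M + j + 1) < L
      have := hstep (M + j) (Nat.le_add_right M j)
      by_contra! hge
      linarith [hjump (M + j + 1) (by omega) hge]
  obtain ⟨K, hK⟩ := eventually_atTop.1 hL
  linarith [hK (M + K) (Nat.le_add_left K M), hbelow K]

lemma frequently_exists_int_abs_sub_lt {t : ℕ → ℝ} (htop : Tendsto t atTop atTop)
    (hΔ : Tendsto (fun k => t (k+1) - t k) atTop (𝓝 0)) {p : ℝ} (hp : 0 < p) (θ : ℝ) {ε : ℝ}
    (hε : 0 < ε) : ∃ᶠ k in atTop, ∃ n : ℤ, |t k - (θ + n * p)| < ε := by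
  rw [frequently_atTop]
  intro N
  obtain ⟨K, hK⟩ := eventually_atTop.1 (hΔ.eventually (gt_mem_nhds hε))
  obtain ⟨n, hn⟩ := exists_int_gt ((t (max N K) - θ) / p)
  have hM : t (max N K) < θ + n * p := by linarith [(div_lt_iff₀ hp).1 hn]
  obtain ⟨k, hk, hLk, hkL⟩ := exists_ge_mem_Ico_of_sub_lt
    (fun k hk => hK k (le_of_max_le_right hk)) hM (htop.eventually_ge_atTop _)
  exact ⟨k, le_of_max_le_left hk, n, abs_sub_lt_iff.2 ⟨by linarith, by linarith⟩⟩

lemma tendsto_dist_spiralPt_cylPt_zero :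
    Tendsto (fun s => dist (spiralPt s) (cylPt s 0)) atTop (𝓝 0) := by
  have hdist : ∀ s, dist (spiralPt s) (cylPt s 0) = sqrt (exp (-s) ^ 2 + exp (-s)) := fun s => by
    rw [← sqrt_sq dist_nonneg, dist_comm, dist_cylPt_spiralPt_sq, sub_self, cos_zero, sub_zero,
      ← exp_nat_mul]
    push_cast
    ring_nf
  simp only [hdist]
  simpa [Function.comp_def] using ((continuous_sqrt.comp (by fun_prop : Continuous fun u : ℝ => u ^ 2 + u)).tendsto
    0).comp tendsto_exp_neg_atTop_nhds_zero

lemma accPts_spiralPt_comp {t : ℕ → ℝ} (htop : Tendsto t atTop atTop)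
    (hΔ : Tendsto (fun k => t (k+1) - t k) atTop (𝓝 0)) :
    accPts (fun k => spiralPt (t k)) = baseCircle := by
  have hnear := tendsto_dist_spiralPt_cylPt_zero.comp htop
  refine (accPts_subset_of_tendsto_sub (v := fun k => cylPt (t k) 0) ?_).trans
    (accPts_subset_of_eventually_mem isClosed_baseCircle ?_) |>.antisymm ?_
  · exact tendsto_zero_iff_norm_tendsto_zero.2 (hnear.congr fun k => dist_eq_norm _ _)
  · exact (htop.eventually_ge_atTop 0).mono fun k => cylPt_zero_mem_baseCircle
  rintro _ ⟨θ, -, rfl⟩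
  refine mem_accPts_of_frequently_dist_lt fun ε hε => ?_
  have hclose := hnear.eventually (gt_mem_nhds (half_pos hε))
  refine ((frequently_exists_int_abs_sub_lt htop hΔ two_pi_pos θ (half_pos hε)).and_eventually
    hclose).mono ?_
  rintro k ⟨⟨n, hn⟩, hk⟩
  calc dist (spiralPt (t k)) (cylPt θ 0)
      ≤ dist (spiralPt (t k)) (cylPt (t k) 0) + dist (cylPt (t k) 0) (cylPt (θ + n * (2 * π)) 0) := by
        rw [cylPt_add_int_mul_two_pi]; exact dist_triangle _ _ _
    _ < ε / 2 + ε / 2 := add_lt_add hk ((dist_cylPt_cylPt_le _ _ _).trans_lt hn)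
    _ = ε := add_halves ε

/-- failure of alternating projections between the cylinder mantle and the
logarithmic spiral: any alternating sequence started on the spiral off the base circle has
successive differences tending to zero yet fails to converge, and its accumulation points
fill the whole base circle. -/
theorem statement16 (a b : ℕ → EuclideanSpace ℝ (Fin 3))
    (hstart : a 0 ∈ spiral \ baseCircle)
    (hb : ∀ k, b k ∈ projSet cylinder (a k))
    (ha : ∀ k, a (k+1) ∈ projSet spiral (b k)) :
    Tendsto (fun k => a k - a (k+1)) atTop (𝓝 0) ∧
    Tendsto (fun k => b k - b (k+1)) atTop (𝓝 0) ∧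
    Tendsto (fun k => a k - b k) atTop (𝓝 0) ∧
    (¬ ∃ l, Tendsto a atTop (𝓝 l)) ∧
    (¬ ∃ l, Tendsto b atTop (𝓝 l)) ∧
    accPts a = baseCircle ∧ accPts b = baseCircle := by
  obtain ⟨t, ht0, hat, hbt, hlt⟩ := exists_params_of_alternating hstart hb ha
  have hgap : ∀ k, infDist (b k) spiral = dist (b k) (a (k+1)) := fun k => by
    rw [dist_eq_norm, (ha k).2]
  have hgap_lt : ∀ k, dist (b k) (a (k+1)) < exp (-t k) := fun k => by
    rw [← hgap, hbt]
    exact infDist_cylPt_spiral_lt (ht0 k)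
  have htop : Tendsto t atTop atTop :=
    tendsto_atTop_of_infDist_eq (strictMono_nat_of_lt_succ hlt).monotone ht0 fun k => by
      rw [← hbt, ← hat, hgap]
  have hab : Tendsto (fun k => a k - b k) atTop (𝓝 0) := by
    refine tendsto_zero_iff_norm_tendsto_zero.2
      ((tendsto_exp_neg_atTop_nhds_zero.comp htop).congr fun k => ?_)
    rw [← dist_eq_norm, hat, hbt, dist_comm, dist_cylPt_spiralPt_self, Function.comp_apply]
  have hba : Tendsto (fun k => b k - a (k+1)) atTop (𝓝 0) :=
    squeeze_zero_norm (fun k => (dist_eq_norm (b k) _ ▸ hgap_lt k).le)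
      (tendsto_exp_neg_atTop_nhds_zero.comp htop)
  have hΔ := tendsto_succ_sub_zero hlt htop fun k => by
    rw [← hbt, ← hat]
    exact hgap_lt k
  have hacc : accPts a = baseCircle := by
    rw [show a = fun k => spiralPt (t k) from funext hat]
    exact accPts_spiralPt_comp htop hΔ
  have haccb : accPts b = baseCircle := (accPts_eq_of_tendsto_sub hab).symm.trans hacc
  exact ⟨by simpa using hab.add hba, by simpa using hba.add (hab.comp (tendsto_add_atTop_nat 1)),
    hab, not_tendsto_of_accPts_eq_baseCircle hacc, not_tendsto_of_accPts_eq_baseCircle haccb,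
    hacc, haccb⟩
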